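/- Let S be a regular semigroup and φ : G → S¹ a skeleton mapping. Then g^{φ,l} and g^{φ,r} are idempotents of S for every g ∈ G⁵ with ↑(g) ≥ 2. -/
import Mathlib


namespace WGO

/-- Letters: the anchors `1`, `x`, `x'` (written `one`, `x`, `xp`) and 5-tuples. -/
inductive Letter : Type
  | one : Letter
  | x : Letter
  | xp : Letter
  | tup : Letter → Letter → Letter → Letter → Letter → Letter
deriving DecidableEq

/-- The involution on anchors: `x' = xp`, `xp' = x`, `1' = 1` (junk on tuples). -/
def ainv : Letter → Letter
  | .x => .xp
  | .xp => .x
  | a => a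

/-- Left entry `g^l`. -/
def Letter.lft : Letter → Letter
  | .tup l _ _ _ _ => l
  | _ => .one

/-- Left anchor `g^{la}`. -/
def Letter.lfta : Letter → Letter
  | .tup _ la _ _ _ => la
  | _ => .one

/-- Middle entry `g^c`. -/
def Letter.ctr : Letter → Letter
  | .tup _ _ c _ _ => c
  | _ => .one

/-- Right anchor `g^{ra}`. -/
def Letter.rgta : Letter → Letter
  | .tup _ _ _ ra _ => ra
  | _ => .one

/-- Right entry `g^r`. -/
def Letter.rgt : Letter → Letter
  | .tup _ _ _ _ r => r
  | _ => .one

/-- The 5-tuple `g_{xx'} = (1,1,x,x',1)`. -/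
def gxx : Letter := .tup .one .one .x .xp .one

/-- The set of anchors `A = {1, x, x'}`. -/
def AnchorS : Set Letter := {Letter.one, Letter.x, Letter.xp}

/-- The sets `G_{i,e}`. -/
def Ge : ℕ → Set Letter
  | 0 => ∅
  | 1 => {gxx}
  | (i+2) => {h | ∃ g ∈ Ge (i+1),
      h = Letter.tup g (ainv g.lfta) g.lft (ainv g.rgta) g ∨
      h = Letter.tup g (ainv g.rgta) g.lft (ainv g.lfta) g}

/-- The sets `G_{i,d}`. -/
def Gd : ℕ → Set Letter
  | 0 => ∅
  | 1 => ∅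
  | 2 => ∅
  | (i+3) => {h | ∃ l la c ra r, h = Letter.tup l la c ra r ∧
      l ∈ Ge (i+2) ∪ Gd (i+2) ∧ r ∈ Ge (i+2) ∪ Gd (i+2) ∧
      c ∈ Ge (i+1) ∪ Gd (i+1) ∧ la ∈ AnchorS ∧ ra ∈ AnchorS ∧
      l ≠ r ∧
      ((c = l.lft ∧ la = ainv l.lfta) ∨ (c = l.rgt ∧ la = ainv l.rgta)) ∧
      ((c = r.lft ∧ ra = ainv r.lfta) ∨ (c = r.rgt ∧ ra = ainv r.rgta))}

/-- `G_i = G_{i,e} ∪ G_{i,d}`. -/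
def GI (i : ℕ) : Set Letter := Ge i ∪ Gd i

/-- `G⁵ = ⋃_{i ≥ 1} G_i`. -/
def G5 : Set Letter := {g | ∃ i, g ∈ GI i}

/-- `G = G⁵ ∪ A`. -/
def Gset : Set Letter := G5 ∪ AnchorS

/-- `G' = G⁵ ∪ {1}`. -/
def Gp : Set Letter := G5 ∪ {Letter.one}

/-- The height `↑(g)`: `0` on `1` (and anchors), and `i` on members of `G_i`. -/
def ht : Letter → ℕ
  | .tup l _ _ _ _ => ht l + 1
  | _ => 0

/-- The free semigroup `G⁺` (on the ambient type of letters). -/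
abbrev W := FreeSemigroup Letter

/-- One-letter word. -/
def wd : Letter → W := FreeSemigroup.of

/-- The word `g^L = (g^{la})' g^l g^{la}`. -/
def gLw (g : Letter) : W := wd (ainv g.lfta) * wd g.lft * wd g.lfta

/-- The word `g^R = (g^{ra})' g^r g^{ra}`. -/
def gRw (g : Letter) : W := wd (ainv g.rgta) * wd g.rgt * wd g.rgta

/-- The generating relation `ρ_e ∪ ρ_s`. -/
def rhoBase : W → W → Prop := fun u v =>
  (u = wd .x * wd .xp * wd .x ∧ v = wd .x) ∨
  (u = wd .xp * wd .x * wd .xp ∧ v = wd .xp) ∨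
  (u = wd gxx ∧ v = wd .x * wd .xp) ∨
  (∃ g ∈ Gp, u = wd .one * wd g ∧ v = wd g) ∨
  (∃ g ∈ Gp, u = wd g * wd .one ∧ v = wd g) ∨
  (∃ g ∈ Gp, u = wd g * wd g ∧ v = wd g) ∨
  (∃ g ∈ G5, 2 ≤ ht g ∧ u = wd g.ctr * gLw g * wd g ∧ v = wd g) ∨
  (∃ g ∈ G5, 2 ≤ ht g ∧ u = wd g * gRw g * wd g.ctr ∧ v = wd g) ∨
  (∃ g ∈ G5, 2 ≤ ht g ∧
    u = wd g.rgt * wd g.rgta * wd g * wd (ainv g.lfta) * wd g.lft ∧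
    v = wd g.rgt * wd g.rgta * wd g.ctr * wd (ainv g.lfta) * wd g.lft)

/-- The congruence `ρ`: the smallest congruence on `G⁺` containing `ρ_e ∪ ρ_s`. -/
def rho : Con W := conGen rhoBase

/-- The quotient `F¹ = G⁺/ρ`. -/
abbrev F1 := rho.Quotient

/-- The `ρ`-class `[u]`. -/
def cls (u : W) : F1 := (u : F1)

/-- The word of a nonempty list of letters (junk on `[]`). -/
def wordOf : List Letter → W
  | [] => wd .one
  | a :: t => t.foldl (fun w b => w * wd b) (wd a)

/-! ### Landscapes -/

/-- A landscape datum: the first letter `g₀` together with the list of pairs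
`(a₁,g₁), …, (aₙ,gₙ)`, encoding the alternating word `g₀a₁g₁⋯aₙgₙ`. -/
abbrev LS := Letter × List (Letter × Letter)

/-- The last letter `τ(u)`. -/
def lastL (u : LS) : Letter := u.2.foldl (fun _ p => p.2) u.1

/-- The letters `g₀, g₁, …, gₙ` of a landscape datum. -/
def letters (u : LS) : List Letter := u.1 :: u.2.map Prod.snd

/-- The underlying word as a list of letters, `g₀ a₁ g₁ ⋯ aₙ gₙ`. -/
def flat (u : LS) : List Letter := u.1 :: u.2.foldr (fun p r => p.1 :: p.2 :: r) []

/-- The underlying word in `G⁺`. -/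
def toW (u : LS) : W := u.2.foldl (fun w p => w * wd p.1 * wd p.2) (wd u.1)

/-- `u₁ * u₂`: concatenation of landscapes merging the doubled letter `τ(u₁) = σ(u₂)`. -/
def star (u v : LS) : LS := (u.1, u.2 ++ v.2)

/-- The triplet `g₁ a g` is left anchored. -/
def LeftAnchored (g1 a g : Letter) : Prop :=
  g ∈ G5 ∧ ((g1 = g.lft ∧ a = g.lfta) ∨ (g1 = g.rgt ∧ a = g.rgta))

/-- The triplet `g a g₁` is right anchored. -/
def RightAnchored (g a g1 : Letter) : Prop :=
  g ∈ G5 ∧ ((g1 = g.lft ∧ a = ainv g.lfta) ∨ (g1 = g.rgt ∧ a = ainv g.rgta))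

/-- The triplet `g₁ a g₂` is anchored. -/
def Anchored (g1 a g2 : Letter) : Prop :=
  LeftAnchored g1 a g2 ∨ RightAnchored g1 a g2

/-- All consecutive triplets are anchored. -/
def Chain : Letter → List (Letter × Letter) → Prop
  | _, [] => True
  | g, (a, g') :: t => Anchored g a g' ∧ Chain g' t

/-- `u` is a landscape. -/
def IsLandscape (u : LS) : Prop :=
  u.1 ∈ Gp ∧ (∀ p ∈ u.2, p.1 ∈ AnchorS ∧ p.2 ∈ Gp) ∧ Chain u.1 u.2

/-- Each step goes up: `g_{j-1} ∈ {gⱼ^l, gⱼ^r}`. -/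
def UpChain : Letter → List (Letter × Letter) → Prop
  | _, [] => True
  | g, (_, g') :: t => (g = g'.lft ∨ g = g'.rgt) ∧ UpChain g' t

/-- Each step goes down: `gⱼ ∈ {g_{j-1}^l, g_{j-1}^r}`. -/
def DownChain : Letter → List (Letter × Letter) → Prop
  | _, [] => True
  | g, (_, g') :: t => (g' = g.lft ∨ g' = g.rgt) ∧ DownChain g' t

/-- `u` is an uphill. -/
def IsUphill (u : LS) : Prop := IsLandscape u ∧ u.2 ≠ [] ∧ UpChain u.1 u.2

/-- `u` is a downhill. -/
def IsDownhill (u : LS) : Prop := IsLandscape u ∧ u.2 ≠ [] ∧ DownChain u.1 u.2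

/-- The letter `gⱼ` is a river of `u` (an interior letter with both neighbours one higher). -/
def IsRiverAt (u : LS) (j : ℕ) : Prop :=
  0 < j ∧ j + 1 < (letters u).length ∧
  ht ((letters u).getD (j-1) .one) = ht ((letters u).getD j .one) + 1 ∧
  ht ((letters u).getD (j+1) .one) = ht ((letters u).getD j .one) + 1

/-- `u` has no rivers. -/
def NoRivers (u : LS) : Prop := ∀ j, ¬ IsRiverAt u j

/-- `u` is a mountain range: a landscape with `σ(u) = τ(u) = 1`. -/
def IsMountainRange (u : LS) : Prop :=
  IsLandscape u ∧ u.1 = Letter.one ∧ lastL u = Letter.one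

/-- `u` is a mountain: a mountain range with no rivers. -/
def IsMountain (u : LS) : Prop := IsMountainRange u ∧ NoRivers u

/-- Uplifting of a river: `u → v`. -/
def Uplift (u v : LS) : Prop :=
  v.1 = u.1 ∧ ∃ t1 a gr b gn t2,
    u.2 = t1 ++ (a, gr) :: (b, gn) :: t2 ∧
    ht (lastL (u.1, t1)) = ht gr + 1 ∧ ht gn = ht gr + 1 ∧
    ((lastL (u.1, t1) = gn ∧ a = ainv b ∧ v.2 = t1 ++ t2) ∨
     (¬(lastL (u.1, t1) = gn ∧ a = ainv b) ∧
       v.2 = t1 ++ (a, Letter.tup gn (ainv b) gr a (lastL (u.1, t1))) :: (b, gn) :: t2))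

/-- `→*`: iterated uplifting of rivers. -/
def UpliftStar : LS → LS → Prop := Relation.ReflTransGen Uplift

/-! ### The maps β₁ and related functions -/

/-- `g^{cⁿ}`: the base of the tower of centers (the first entry of `β₁(g)`'s hills). -/
def cbase : Letter → Letter
  | .tup l la c ra r => if ht l = 0 then Letter.tup l la c ra r else cbase c
  | g => g

/-- The pair list of the uphill `β_{1,l}(g)` (starting letter `cbase g`). -/
def lPairs : Letter → List (Letter × Letter)
  | .tup l la c ra r =>
      if ht l = 0 then []
      else lPairs c ++ [(ainv la, l), (la, Letter.tup l la c ra r)]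
  | _ => []

/-- The pair list of the downhill `β_{1,r}(g)` (starting letter `g`). -/
def rPairs : Letter → List (Letter × Letter)
  | .tup l _ c ra r =>
      if ht l = 0 then []
      else (ainv ra, r) :: (ra, c) :: rPairs c
  | _ => []

/-- `β₁` on a single letter of `G`. -/
def beta1L : Letter → LS
  | .one => (.one, [])
  | .x => (.one, [(.one, gxx), (.x, .one)])
  | .xp => (.one, [(.xp, gxx), (.one, .one)])
  | g => if ht g % 2 = 0 then (cbase g, lPairs g ++ rPairs g)
         else (.one, (.one, cbase g) :: (lPairs g ++ rPairs g ++ [(.one, .one)]))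

/-- `β₁` on a word (given as a list of letters): the `*`-product of the `β₁` of its letters. -/
def beta1W (l : List Letter) : LS := (.one, (l.map (fun h => (beta1L h).2)).flatten)

/-! ### Hills of mountains, peaks, reverses -/

/-- Pair list of the maximal uphill prefix. -/
def lamLPairs : Letter → List (Letter × Letter) → List (Letter × Letter)
  | _, [] => []
  | g, (a, g') :: t => if ht g < ht g' then (a, g') :: lamLPairs g' t else []

/-- The left hill `λ_l(u)` of a mountain. -/
def lamL (u : LS) : LS := (u.1, lamLPairs u.1 u.2)

/-- The peak `κ(u)` of a mountain. -/
def peak (u : LS) : Letter := lastL (lamL u)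

/-- The right hill `λ_r(u)` of a mountain. -/
def lamR (u : LS) : LS := (peak u, u.2.drop (lamLPairs u.1 u.2).length)

/-- Pair list of the reverse of a landscape. -/
def revPairs : Letter → List (Letter × Letter) → List (Letter × Letter)
  | _, [] => []
  | g, (a, g') :: t => revPairs g' t ++ [(ainv a, g)]

/-- The reverse `ū` of a landscape `u`. -/
def rev (u : LS) : LS := (lastL u, revPairs u.1 u.2)

/-! ### Green's relations on `F¹` -/

/-- `s ≤_R t` : `s F¹ ⊆ t F¹`. -/
def leR (s t : F1) : Prop := ∀ y : F1, (∃ m, y = s * m) → ∃ m, y = t * m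

/-- `s ≤_L t` : `F¹ s ⊆ F¹ t`. -/
def leL (s t : F1) : Prop := ∀ y : F1, (∃ m, y = m * s) → ∃ m, y = m * t

/-- `s ≤_J t` : `F¹ s F¹ ⊆ F¹ t F¹`. -/
def leJ (s t : F1) : Prop := ∀ y : F1, (∃ p q, y = p * s * q) → ∃ p q, y = p * t * q

/-- Green's relation `R`. -/
def Rrel (s t : F1) : Prop := leR s t ∧ leR t s

/-- Green's relation `L`. -/
def Lrel (s t : F1) : Prop := leL s t ∧ leL t s

/-- Green's relation `J`. -/
def Jrel (s t : F1) : Prop := leJ s t ∧ leJ t s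

/-- Green's relation `H = R ∩ L`. -/
def Hrel (s t : F1) : Prop := Rrel s t ∧ Lrel s t

/-- Green's relation `D = L ∨ R` (the join of the equivalences `L` and `R`). -/
def Drel : F1 → F1 → Prop := Relation.EqvGen (fun s t => Lrel s t ∨ Rrel s t)

/-- The sandwich set `S(e,f)` in `F¹`. -/
def sandw (e f : F1) : Set F1 :=
  {h | h * h = h ∧ f * h = h ∧ h * e = h ∧ e * h * f = e * f}

/-- The ground `ε(g)`. -/
def ground : Letter → Set Letter
  | .tup l la c ra r => ground l ∪ {Letter.tup l la c ra r} ∪ ground r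
  | g => {g}

/-- `F = F¹ \ {[1]}`. -/
def Fset : Set F1 := {s | s ≠ cls (wd .one)}

/-- A valley: a downhill followed by an uphill, merged at the lowest letter. -/
def IsValley (w : LS) : Prop :=
  ∃ d u : LS, IsDownhill d ∧ IsUphill u ∧ lastL d = u.1 ∧ w = star d u

/-- A canyon: a valley with `σ(w) = τ(w)`. -/
def IsCanyon (w : LS) : Prop := IsValley w ∧ w.1 = lastL w

/-- A gorge: a canyon with `w →* σ(w)`. -/
def IsGorge (w : LS) : Prop := IsCanyon w ∧ UpliftStar w (w.1, [])

/-- `g^{φ,l} = φ(g^c) φ((g^{la})') φ(g^l) φ(g^{la})`. -/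
def gphiL {M : Type*} [Monoid M] (φ : Letter → M) (g : Letter) : M :=
  φ g.ctr * φ (ainv g.lfta) * φ g.lft * φ g.lfta

/-- `g^{φ,r} = φ((g^{ra})') φ(g^r) φ(g^{ra}) φ(g^c)`. -/
def gphiR {M : Type*} [Monoid M] (φ : Letter → M) (g : Letter) : M :=
  φ (ainv g.rgta) * φ g.rgt * φ g.rgta * φ g.ctr

/-- `φ : G → S¹` is a skeleton mapping for the regular semigroup `S`, where `S¹` is
encoded as a monoid `M` whose underlying set is `S ∪ {1}`.  Condition (iii) uses the
non-idempotent sandwich set `S(a,b) = S(a'a, bb')` for some inverses `a' ∈ V(a)`,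
`b' ∈ V(b)`. -/
def IsSkeleton {M : Type*} [Monoid M] (S : Set M) (φ : Letter → M) : Prop :=
  φ .x ∈ S ∧ φ .xp ∈ S ∧
  φ .x * φ .xp * φ .x = φ .x ∧ φ .xp * φ .x * φ .xp = φ .xp ∧
  φ gxx = φ .x * φ .xp ∧
  φ .one * φ .one = φ .one ∧
  φ .one * φ .x = φ .x ∧ φ .x * φ .one = φ .x ∧
  φ .one * φ .xp = φ .xp ∧ φ .xp * φ .one = φ .xp ∧
  ∀ g ∈ G5, 2 ≤ ht g →
    ∃ a' b' : M,
      gphiR φ g * a' * gphiR φ g = gphiR φ g ∧ a' * gphiR φ g * a' = a' ∧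
      gphiL φ g * b' * gphiL φ g = gphiL φ g ∧ b' * gphiL φ g * b' = b' ∧
      φ g * φ g = φ g ∧
      (gphiL φ g * b') * φ g = φ g ∧ φ g * (a' * gphiR φ g) = φ g ∧
      (a' * gphiR φ g) * φ g * (gphiL φ g * b') = (a' * gphiR φ g) * (gphiL φ g * b')

/-! ### Auxiliary lemmas for `statement17` -/

lemma ainv_ainv (a : Letter) : ainv (ainv a) = a := by cases a <;> rfl

lemma lft_eq_rgt : ∀ i g, g ∈ Ge i → g.lft = g.rgt := by
  intro i g hg
  match i, hg with
  | 0, hg => exact False.elim hg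
  | 1, hg =>
    have h : g = gxx := hg
    subst h; rfl
  | (i + 2), hg =>
    obtain ⟨p, hp, hc | hc⟩ := hg <;> subst hc <;> rfl

lemma ht_of_mem : ∀ i, ∀ g ∈ GI i, ht g = i := by
  intro i
  induction i using Nat.strong_induction_on with
  | _ i ih =>
    intro g hg
    rcases i with _ | i
    · rcases hg with h | h
      · exact False.elim h
      · exact False.elim h
    rcases i with _ | i
    · rcases hg with h | h
      · have h1 : g = gxx := h
        subst h1; rfl
      · exact False.elim h
    rcases hg with h | h
    · obtain ⟨p, hp, hc | hc⟩ := h <;> subst hc <;>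
        exact congrArg (· + 1) (ih (i + 1) (by omega) p (Or.inl hp))
    · rcases i with _ | i
      · exact False.elim h
      · obtain ⟨l, la, c, ra, r, rfl, hl, hr, -⟩ := h
        have hL : ht l = i + 2 := ih (i + 2) (by omega) l hl
        have h2 : ht (Letter.tup l la c ra r) = ht l + 1 := rfl
        rw [h2, hL]

lemma mem_GI_one {g : Letter} (h : g ∈ GI 1) : g = gxx := by
  rcases h with h | h
  · exact h
  · exact False.elim h

lemma struct : ∀ m g, g ∈ GI (m + 2) →
    g.lft ∈ GI (m + 1) ∧ g.rgt ∈ GI (m + 1) ∧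
    (g.ctr = Letter.one ∨ g.ctr ∈ GI m) ∧
    ((g.ctr = g.lft.lft ∧ g.lfta = ainv g.lft.lfta) ∨
     (g.ctr = g.lft.rgt ∧ g.lfta = ainv g.lft.rgta)) ∧
    ((g.ctr = g.rgt.lft ∧ g.rgta = ainv g.rgt.lfta) ∨
     (g.ctr = g.rgt.rgt ∧ g.rgta = ainv g.rgt.rgta)) := by
  intro m g hg
  have hctr : ∀ p, p ∈ Ge (m + 1) → (p.lft = Letter.one ∨ p.lft ∈ GI m) := by
    intro p hp
    rcases m with _ | m
    · have h1 : p = gxx := hp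
      subst h1; exact Or.inl rfl
    · obtain ⟨q, hq, hc | hc⟩ := hp <;> subst hc <;> exact Or.inr (Or.inl hq)
  rcases hg with hg | hg
  · obtain ⟨p, hp, hc | hc⟩ := hg
    · subst hc
      exact ⟨Or.inl hp, Or.inl hp, hctr p hp,
        Or.inl ⟨rfl, rfl⟩, Or.inr ⟨lft_eq_rgt _ _ hp, rfl⟩⟩
    · subst hc
      exact ⟨Or.inl hp, Or.inl hp, hctr p hp,
        Or.inr ⟨lft_eq_rgt _ _ hp, rfl⟩, Or.inl ⟨rfl, rfl⟩⟩
  · rcases m with _ | m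
    · exact False.elim hg
    · obtain ⟨l, la, c, ra, r, rfl, hl, hr, hc, -, -, -, hA, hB⟩ := hg
      exact ⟨hl, hr, Or.inr hc, hA, hB⟩

lemma pw2 {M : Type*} [Monoid M] {a b d : M} (h : a * b = d) :
    ∀ s : M, a * (b * s) = d * s := fun s => by rw [← mul_assoc, h]

lemma pw3 {M : Type*} [Monoid M] {a b c d : M} (h : a * b * c = d) :
    ∀ s : M, a * (b * (c * s)) = d * s := fun s => by
  rw [← mul_assoc, ← mul_assoc, h]

lemma sand1 {M : Type*} [Monoid M] {P Q Hm Cm : M}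
    (hu : Hm * (Q * Cm * P) * Hm = Hm) :
    P * Hm * Q * Cm * (P * Hm * Q) = P * Hm * Q := by
  have hu' : ∀ s : M, Hm * (Q * (Cm * (P * (Hm * s)))) = Hm * s := fun s => by
    have := congrArg (· * s) hu
    simpa [mul_assoc] using this
  have h2 := hu' Q
  calc P * Hm * Q * Cm * (P * Hm * Q)
      = P * (Hm * (Q * (Cm * (P * (Hm * Q))))) := by simp [mul_assoc]
    _ = P * (Hm * Q) := by rw [h2]
    _ = P * Hm * Q := by rw [mul_assoc]

lemma core {M : Type*} [Monoid M] {H C X Y A B : M}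
    (hXCX : X * C * X = X) (hYCY : Y * C * Y = Y) (hCC : C * C = C)
    (hHH : H * H = H)
    (hfH : C * X * B * H = H)
    (hHe : H * (A * (Y * C)) = H)
    (hef : A * (Y * C) * H * (C * X * B) = A * (Y * C) * (C * X * B)) :
    H * X * H = H ∧ H * Y * H = H := by
  have hXCX' := pw3 hXCX
  have hYCY' := pw3 hYCY
  have hCC' := pw2 hCC
  have hHH' := pw2 hHH
  have hfH' : ∀ s : M, C * (X * (B * (H * s))) = H * s := fun s => by
    have := congrArg (· * s) hfH
    simpa [mul_assoc] using this
  have hHe' : ∀ s : M, H * (A * (Y * (C * s))) = H * s := fun s => by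
    have := congrArg (· * s) hHe
    simpa [mul_assoc] using this
  have hef' : ∀ s : M,
      A * (Y * (C * (H * (C * (X * (B * s)))))) =
      A * (Y * (C * (C * (X * (B * s))))) := fun s => by
    have := congrArg (· * s) hef
    simpa [mul_assoc] using this
  have keyX : ∀ t : M, H * (X * (H * t)) = H * t := by
    intro t
    calc H * (X * (H * t))
        = H * (A * (Y * (C * (X * (H * t))))) := (hHe' (X * (H * t))).symm
      _ = H * (A * (Y * (C * (X * (C * (X * (B * (H * t)))))))) := by
          conv_lhs => rw [← hfH' t]
      _ = H * (A * (Y * (C * (X * (B * (H * t)))))) := by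
          rw [hXCX' (B * (H * t))]
      _ = H * (A * (Y * (C * (C * (X * (B * (H * t))))))) := by
          conv_lhs => rw [← hCC' (X * (B * (H * t)))]
      _ = H * (A * (Y * (C * (H * (C * (X * (B * (H * t)))))))) := by
          conv_lhs => rw [← hef' (H * t)]
      _ = H * (A * (Y * (C * (H * (H * t))))) := by
          conv_lhs => rw [hfH' t]
      _ = H * (A * (Y * (C * (H * t)))) := by rw [hHH' t]
      _ = H * (H * t) := hHe' (H * t)
      _ = H * t := hHH' t
  have keyY : ∀ t : M, H * (Y * (H * t)) = H * t := by
    intro t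
    calc H * (Y * (H * t))
        = H * (A * (Y * (C * (Y * (H * t))))) := (hHe' (Y * (H * t))).symm
      _ = H * (A * (Y * (H * t))) := by rw [hYCY' (H * t)]
      _ = H * (A * (Y * (C * (X * (B * (H * t)))))) := by
          conv_lhs => rw [← hfH' t]
      _ = H * (A * (Y * (C * (C * (X * (B * (H * t))))))) := by
          conv_lhs => rw [← hCC' (X * (B * (H * t)))]
      _ = H * (A * (Y * (C * (H * (C * (X * (B * (H * t)))))))) := by
          conv_lhs => rw [← hef' (H * t)]
      _ = H * (A * (Y * (C * (H * (H * t))))) := by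
          conv_lhs => rw [hfH' t]
      _ = H * (A * (Y * (C * (H * t)))) := by rw [hHH' t]
      _ = H * (H * t) := hHe' (H * t)
      _ = H * t := hHH' t
  constructor
  · simpa [mul_assoc] using keyX 1
  · simpa [mul_assoc] using keyY 1

lemma mainLemma {M : Type*} [Monoid M] (S : Set M)
    (hmulS : ∀ a ∈ S, ∀ b ∈ S, a * b ∈ S)
    (hreg : ∀ a ∈ S, ∃ b ∈ S, a * b * a = a ∧ b * a * b = b)
    (hcover : ∀ m : M, m ∈ S ∨ m = 1)
    (φ : Letter → M) (hφ : IsSkeleton S φ) :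
    ∀ n : ℕ, ∀ g : Letter, g ∈ G5 → ht g = n →
      (φ g ∈ S ∧ φ g * φ g = φ g ∧
        φ g * (φ (ainv g.lfta) * φ g.lft * φ g.lfta) * φ g = φ g ∧
        φ g * (φ (ainv g.rgta) * φ g.rgt * φ g.rgta) * φ g = φ g) ∧
      (2 ≤ n →
        gphiL φ g ∈ S ∧ gphiL φ g * gphiL φ g = gphiL φ g ∧
        gphiR φ g ∈ S ∧ gphiR φ g * gphiR φ g = gphiR φ g) := by
  obtain ⟨hx, hxp, hxxpx, hxpxxp, hgxx, h11, h1x, hx1, h1xp, hxp1, hmain⟩ := hφ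
  have memL : ∀ x : M, ∀ s ∈ S, x * s ∈ S := by
    intro x s hs
    rcases hcover x with hx' | hx'
    · exact hmulS x hx' s hs
    · rw [hx', one_mul]; exact hs
  have memR : ∀ x : M, ∀ s ∈ S, s * x ∈ S := by
    intro x s hs
    rcases hcover x with hx' | hx'
    · exact hmulS s hs x hx'
    · rw [hx', mul_one]; exact hs
  have oneS : ∀ a ∈ S, ∀ r : M, a * r = 1 → (1 : M) ∈ S := by
    intro a ha r h
    obtain ⟨b, hb, hb1, -⟩ := hreg a ha
    have hab : a * b = 1 := by
      have h3 : a * b * (a * r) = a * r := by rw [← mul_assoc, hb1]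
      rw [h, mul_one] at h3
      exact h3
    rw [← hab]
    exact hmulS a ha b hb
  intro n
  induction n using Nat.strong_induction_on with
  | _ n ih =>
    intro g hg hn
    obtain ⟨i, hgi⟩ := hg
    have hi : ht g = i := ht_of_mem i g hgi
    have hin : i = n := by omega
    subst hin
    rcases i with _ | i
    · rcases hgi with h | h
      · exact False.elim h
      · exact False.elim h
    rcases i with _ | i
    · -- height 1 : g = gxx
      have h1 : g = gxx := mem_GI_one hgi
      subst h1
      have e1 : ainv (Letter.lfta gxx) = Letter.one := rfl
      have e2 : Letter.lft gxx = Letter.one := rfl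
      have e3 : Letter.lfta gxx = Letter.one := rfl
      have e4 : ainv (Letter.rgta gxx) = Letter.x := rfl
      have e5 : Letter.rgt gxx = Letter.one := rfl
      have e6 : Letter.rgta gxx = Letter.xp := rfl
      refine ⟨⟨?_, ?_, ?_, ?_⟩, fun h => absurd h (by omega)⟩
      · rw [hgxx]; exact hmulS _ hx _ hxp
      · rw [hgxx]
        simp only [mul_assoc, pw3 hxxpx]
      · rw [e1, e2, e3, hgxx]
        simp only [mul_assoc, pw2 hxp1, pw3 hxxpx]
      · rw [e4, e5, e6, hgxx]
        simp only [mul_assoc, pw2 hx1, pw3 hxxpx]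
    · -- height i + 2
      obtain ⟨hlft, hrgt, hctr, hA, hB⟩ := struct i g hgi
      have hlg : g.lft ∈ G5 := ⟨i + 1, hlft⟩
      have hrg : g.rgt ∈ G5 := ⟨i + 1, hrgt⟩
      have hhl : ht g.lft = i + 1 := ht_of_mem _ _ hlft
      have hhr : ht g.rgt = i + 1 := ht_of_mem _ _ hrgt
      obtain ⟨⟨Sl, -, Hul, Hvl⟩, -⟩ := ih (i + 1) (by omega) g.lft hlg hhl
      obtain ⟨⟨Sr, -, Hur, Hvr⟩, -⟩ := ih (i + 1) (by omega) g.rgt hrg hhr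
      have hCC : φ g.ctr * φ g.ctr = φ g.ctr := by
        rcases hctr with hc | hc
        · rw [hc]; exact h11
        · exact (ih i (by omega) g.ctr ⟨i, hc⟩ (ht_of_mem _ _ hc)).1.2.1
      have hXCX : (φ (ainv g.lfta) * φ g.lft * φ g.lfta) * φ g.ctr *
          (φ (ainv g.lfta) * φ g.lft * φ g.lfta) =
          φ (ainv g.lfta) * φ g.lft * φ g.lfta := by
        rcases hA with ⟨hc, ha⟩ | ⟨hc, ha⟩
        · rw [hc, ha, ainv_ainv]; exact sand1 Hul
        · rw [hc, ha, ainv_ainv]; exact sand1 Hvl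
      have hYCY : (φ (ainv g.rgta) * φ g.rgt * φ g.rgta) * φ g.ctr *
          (φ (ainv g.rgta) * φ g.rgt * φ g.rgta) =
          φ (ainv g.rgta) * φ g.rgt * φ g.rgta := by
        rcases hB with ⟨hc, ha⟩ | ⟨hc, ha⟩
        · rw [hc, ha, ainv_ainv]; exact sand1 Hur
        · rw [hc, ha, ainv_ainv]; exact sand1 Hvr
      obtain ⟨A, B, -, -, -, -, hHH, hfH0, hHe0, hef0⟩ :=
        hmain g ⟨i + 2, hgi⟩ (by omega)
      obtain ⟨HXH, HYH⟩ :=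
        core (H := φ g) (C := φ g.ctr)
          (X := φ (ainv g.lfta) * φ g.lft * φ g.lfta)
          (Y := φ (ainv g.rgta) * φ g.rgt * φ g.rgta)
          (A := A) (B := B) hXCX hYCY hCC hHH
          (by simpa [gphiL, mul_assoc] using hfH0)
          (by simpa [gphiR, mul_assoc] using hHe0)
          (by simpa [gphiL, gphiR, mul_assoc] using hef0)
      have SgphiL : gphiL φ g ∈ S :=
        memR (φ g.lfta) _ (memL (φ g.ctr * φ (ainv g.lfta)) _ Sl)
      have SgphiR : gphiR φ g ∈ S :=
        memR (φ g.ctr) _ (memR (φ g.rgta) _ (memL (φ (ainv g.rgta)) _ Sr))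
      have idemL : gphiL φ g * gphiL φ g = gphiL φ g := by
        have key := pw3 hXCX
        have h1 : φ g.ctr * ((φ (ainv g.lfta) * φ g.lft * φ g.lfta) *
            (φ g.ctr * ((φ (ainv g.lfta) * φ g.lft * φ g.lfta) * 1))) =
            φ g.ctr * ((φ (ainv g.lfta) * φ g.lft * φ g.lfta) * 1) := by
          rw [key]
        simpa [gphiL, mul_assoc] using h1
      have idemR : gphiR φ g * gphiR φ g = gphiR φ g := by
        have key := pw3 hYCY
        have h1 : (φ (ainv g.rgta) * φ g.rgt * φ g.rgta) * (φ g.ctr *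
            ((φ (ainv g.rgta) * φ g.rgt * φ g.rgta) * (φ g.ctr * 1))) =
            (φ (ainv g.rgta) * φ g.rgt * φ g.rgta) * (φ g.ctr * 1) := by
          rw [key]
        simpa [gphiR, mul_assoc] using h1
      have memS : φ g ∈ S := by
        rcases hcover (φ g) with hS | h1
        · exact hS
        · have hb1 : gphiL φ g * B = 1 := by
            rw [h1, mul_one] at hfH0; exact hfH0
          have h1S := oneS _ SgphiL B hb1
          rw [h1]; exact h1S
      exact ⟨⟨memS, hHH, HXH, HYH⟩, fun _ => ⟨SgphiL, idemL, SgphiR, idemR⟩⟩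


/-- Lemma `l51`: if `φ` is a skeleton mapping for a regular semigroup `S`, then
`g^{φ,l}` and `g^{φ,r}` are idempotents of `S` for all `g ∈ G⁵` with `↑(g) ≥ 2`. -/
theorem statement17 {M : Type*} [Monoid M] (S : Set M)
    (hmulS : ∀ a ∈ S, ∀ b ∈ S, a * b ∈ S)
    (hreg : ∀ a ∈ S, ∃ b ∈ S, a * b * a = a ∧ b * a * b = b)
    (hcover : ∀ m : M, m ∈ S ∨ m = 1)
    (φ : Letter → M) (hφ : IsSkeleton S φ)
    (g : Letter) (hg : g ∈ G5) (h2 : 2 ≤ ht g) :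
    gphiL φ g ∈ S ∧ gphiL φ g * gphiL φ g = gphiL φ g ∧
    gphiR φ g ∈ S ∧ gphiR φ g * gphiR φ g = gphiR φ g := by
  obtain ⟨-, h⟩ := mainLemma S hmulS hreg hcover φ hφ (ht g) g hg rfl
  exact h h2
end WGO
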